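/- With notation as in the thickening construction, for all 1 ≤ l ≤ k the coefficients satisfy p_{kl} = Σ_{l ≤ j ≤ k} q_{kj} r_{jl}, where r_{jl} = −⟨s_{i_j} s_{i_{j-1}} ⋯ s_{i_{l+1}} α_{i_l}^∨, α_{∞_j}⟩. -/

import Mathlib

/-- The thickened generalized Cartan matrix `Ã` on `Ĩ = I ⊔ {∞_1, ∞_2, …}`. -/
def thickA {I : Type*} (a : I → I → ℤ) : (I ⊕ ℕ) → (I ⊕ ℕ) → ℤ
  | Sum.inl i, Sum.inl j => a i j
  | Sum.inl _, Sum.inr _ => -2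
  | Sum.inr _, Sum.inl _ => -2
  | Sum.inr l, Sum.inr l' => if l = l' then 2 else -2

/-- Weights in coordinates: `λ` is the function `r ↦ ⟨α_r^∨, λ⟩`; the simple reflection
`s_t` acts by `(s_t λ)(r) = λ(r) - λ(t) · Ã(r,t)`. -/
def wRefl {I : Type*} (a : I → I → ℤ) (t : I ⊕ ℕ) (lam : (I ⊕ ℕ) → ℤ) : (I ⊕ ℕ) → ℤ :=
  fun r => lam r - lam t * thickA a r t

/-- The fundamental weight `ω_t` in coordinates. -/
def fw {I : Type*} [DecidableEq I] (t : I ⊕ ℕ) : (I ⊕ ℕ) → ℤ :=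
  fun r => if r = t then 1 else 0

/-- `wChain a i l k` is `s_{i_{l+1}} s_{∞_{l+1}} ⋯ s_{i_k} s_{∞_k}` acting on weights. -/
def wChain {I : Type*} (a : I → I → ℤ) (i : ℕ → I) (l : ℕ) :
    ℕ → ((I ⊕ ℕ) → ℤ) → ((I ⊕ ℕ) → ℤ)
  | 0 => id
  | k + 1 =>
    if k + 1 ≤ l then id
    else fun lam => wChain a i l k (wRefl a (.inl (i (k + 1))) (wRefl a (.inr (k + 1)) lam))

/-- `p_{kl} = -⟨α_{i_l}^∨, s_{∞_l} s_{i_{l+1}} s_{∞_{l+1}} ⋯ s_{i_k} s_{∞_k} ω_{∞_k}⟩`. -/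
def pCoeff {I : Type*} [DecidableEq I] (a : I → I → ℤ) (i : ℕ → I) (k l : ℕ) : ℤ :=
  -(wRefl a (.inr l) (wChain a i l k (fw (.inr k))) (.inl (i l)))

/-- `q_{kl} = -⟨α_{∞_l}^∨, s_{i_{l+1}} s_{∞_{l+1}} ⋯ s_{i_k} s_{∞_k} ω_{∞_k}⟩`. -/
def qCoeff {I : Type*} [DecidableEq I] (a : I → I → ℤ) (i : ℕ → I) (k l : ℕ) : ℤ :=
  -(wChain a i l k (fw (.inr k)) (.inr l))

/-- The pairing `⟨c, α_t⟩` of a coroot `c` (coordinates in the simple coroot basis, finitely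
supported) with the simple root `α_t`. -/
def corootPair {I : Type*} (a : I → I → ℤ) (c : (I ⊕ ℕ) →₀ ℤ) (t : I ⊕ ℕ) : ℤ :=
  c.sum fun r m => m * thickA a r t

/-- The simple reflection `s_t` acting on coroots: `s_t c = c - ⟨c, α_t⟩ α_t^∨`. -/
noncomputable def cRefl {I : Type*} [DecidableEq I] (a : I → I → ℤ) (t : I ⊕ ℕ)
    (c : (I ⊕ ℕ) →₀ ℤ) : (I ⊕ ℕ) →₀ ℤ :=
  c - corootPair a c t • Finsupp.single t 1

/-- `cChain a i l j` is the coroot `s_{i_j} s_{i_{j-1}} ⋯ s_{i_{l+1}} α_{i_l}^∨`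
(equal to `α_{i_l}^∨` if `j ≤ l`). -/
noncomputable def cChain {I : Type*} [DecidableEq I] (a : I → I → ℤ) (i : ℕ → I) (l : ℕ) :
    ℕ → ((I ⊕ ℕ) →₀ ℤ)
  | 0 => Finsupp.single (.inl (i l)) 1
  | j + 1 =>
    if j + 1 ≤ l then Finsupp.single (.inl (i l)) 1
    else cRefl a (.inl (i (j + 1))) (cChain a i l j)

/-- `r_{jl} = -⟨s_{i_j} s_{i_{j-1}} ⋯ s_{i_{l+1}} α_{i_l}^∨, α_{∞_j}⟩`. -/
noncomputable def rCoeff {I : Type*} [DecidableEq I] (a : I → I → ℤ) (i : ℕ → I)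
    (j l : ℕ) : ℤ :=
  -corootPair a (cChain a i l j) (.inr j)
/-!
Pass from weights to coroots through the pairing `⟨c, λ⟩`, under which the weight chain
`s_{i_{l+1}} s_{∞_{l+1}} ⋯ s_{i_k} s_{∞_k}` is adjoint to the coroot chain
`T_{lk} = s_{∞_k} s_{i_k} ⋯ s_{∞_{l+1}} s_{i_{l+1}}`. Then `p_{kl}` and `q_{kj}` are minus the
`α_{∞_k}^∨`-coordinates of `T_{lk} s_{∞_l} α_{i_l}^∨` and of `T_{jk} α_{∞_j}^∨`. Writing
`c_{lj} = s_{i_j} ⋯ s_{i_{l+1}} α_{i_l}^∨`, the definition of `r` says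
`s_{∞_j} c_{lj} = c_{lj} + r_{jl} α_{∞_j}^∨`, so inductively
`T_{lk} s_{∞_l} α_{i_l}^∨ = c_{lk} + Σ_{l ≤ j ≤ k} r_{jl} T_{jk} α_{∞_j}^∨`.
Since `c_{lk}` lies in the span of the `α_i^∨`, `i ∈ I`, its `α_{∞_k}^∨`-coordinate vanishes.
-/

namespace Thickening

open Finsupp

variable {I : Type*} (a : I → I → ℤ) (i : ℕ → I)

noncomputable def cReflₗ (t : I ⊕ ℕ) : Module.End ℤ ((I ⊕ ℕ) →₀ ℤ) :=
  LinearMap.id - (linearCombination ℤ fun r => thickA a r t).smulRight (single t 1)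

/-- `s_{∞_k} s_{i_k} ⋯ s_{∞_{l+1}} s_{i_{l+1}}` (the identity if `k ≤ l`). -/
noncomputable def wChainTranspose (l : ℕ) : ℕ → Module.End ℤ ((I ⊕ ℕ) →₀ ℤ)
  | 0 => LinearMap.id
  | k + 1 =>
    if k + 1 ≤ l then LinearMap.id
    else cReflₗ a (.inr (k + 1)) ∘ₗ cReflₗ a (.inl (i (k + 1))) ∘ₗ wChainTranspose l k

variable {a i}

theorem wChainTranspose_of_le {l k : ℕ} (h : k ≤ l) : wChainTranspose a i l k = LinearMap.id := by
  cases k with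
  | zero => rfl
  | succ k => simp [wChainTranspose, h]

variable [DecidableEq I]

@[simp]
theorem coe_cReflₗ (t : I ⊕ ℕ) : ⇑(cReflₗ a t) = cRefl a t :=
  rfl

theorem wChainTranspose_succ {l k : ℕ} (h : l ≤ k) (c : (I ⊕ ℕ) →₀ ℤ) :
    wChainTranspose a i l (k + 1) c
      = cRefl a (.inr (k + 1)) (cRefl a (.inl (i (k + 1))) (wChainTranspose a i l k c)) := by
  simp [wChainTranspose, show ¬k + 1 ≤ l by omega]

/-- The pairing `⟨c, λ⟩` is `linearCombination ℤ λ c`; reflections are self-adjoint for it. -/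
theorem linearCombination_wRefl (t : I ⊕ ℕ) (lam : (I ⊕ ℕ) → ℤ) (c : (I ⊕ ℕ) →₀ ℤ) :
    linearCombination ℤ (wRefl a t lam) c = linearCombination ℤ lam (cRefl a t c) := by
  rw [← coe_cReflₗ, ← LinearMap.comp_apply]
  congr 1
  refine lhom_ext fun r m => ?_
  simp only [cReflₗ, wRefl, LinearMap.comp_apply, LinearMap.sub_apply, LinearMap.id_apply,
    LinearMap.smulRight_apply, linearCombination_single, map_sub, map_smul, smul_eq_mul]
  ring

theorem linearCombination_fw (t : I ⊕ ℕ) (c : (I ⊕ ℕ) →₀ ℤ) :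
    linearCombination ℤ (fw t) c = c t := by
  induction c using Finsupp.induction_linear with
  | zero => simp
  | add c d hc hd => simp [hc, hd]
  | single r m => by_cases h : r = t <;> simp [fw, h]

theorem linearCombination_wChain (l k : ℕ) (lam : (I ⊕ ℕ) → ℤ) (c : (I ⊕ ℕ) →₀ ℤ) :
    linearCombination ℤ (wChain a i l k lam) c
      = linearCombination ℤ lam (wChainTranspose a i l k c) := by
  induction k generalizing lam with
  | zero => rfl
  | succ k ih =>
    by_cases h : k + 1 ≤ l
    · simp [wChain, wChainTranspose, h]
    · simp [wChain, wChainTranspose, h, ih, linearCombination_wRefl]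

theorem linearCombination_wChain_fw (l k : ℕ) (t : I ⊕ ℕ) (c : (I ⊕ ℕ) →₀ ℤ) :
    linearCombination ℤ (wChain a i l k (fw t)) c = wChainTranspose a i l k c t := by
  rw [linearCombination_wChain, linearCombination_fw]

theorem cChain_of_le {l j : ℕ} (h : j ≤ l) : cChain a i l j = single (.inl (i l)) 1 := by
  cases j with
  | zero => rfl
  | succ j => simp [cChain, h]

theorem cChain_succ {l j : ℕ} (h : l ≤ j) :
    cChain a i l (j + 1) = cRefl a (.inl (i (j + 1))) (cChain a i l j) := by
  simp [cChain, show ¬j + 1 ≤ l by omega]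

theorem cChain_apply_inr (l j m : ℕ) : cChain a i l j (.inr m) = 0 := by
  induction j with
  | zero => simp [cChain]
  | succ j ih =>
    by_cases h : j + 1 ≤ l
    · simp [cChain_of_le h]
    · rw [cChain_succ (by omega)]
      simp [cRefl, ih]

theorem cRefl_inr_cChain (l j : ℕ) :
    cRefl a (.inr j) (cChain a i l j) = cChain a i l j + rCoeff a i j l • single (.inr j) 1 := by
  rw [cRefl, rCoeff, neg_smul, sub_eq_add_neg]

theorem wChainTranspose_cRefl_inr_single {l k : ℕ} (hlk : l ≤ k) :
    wChainTranspose a i l k (cRefl a (.inr l) (single (.inl (i l)) 1))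
      = cChain a i l k
        + ∑ j ∈ Finset.Icc l k, rCoeff a i j l • wChainTranspose a i j k (single (.inr j) 1) := by
  induction k, hlk using Nat.le_induction with
  | base =>
    rw [Finset.Icc_self, Finset.sum_singleton, wChainTranspose_of_le le_rfl, LinearMap.id_apply,
      LinearMap.id_apply, ← cChain_of_le (a := a) (i := i) le_rfl, cRefl_inr_cChain]
  | succ k hlk ih =>
    have hstep : ∀ j ∈ Finset.Icc l k,
        cRefl a (.inr (k + 1)) (cRefl a (.inl (i (k + 1)))
          (rCoeff a i j l • wChainTranspose a i j k (single (.inr j) 1)))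
        = rCoeff a i j l • wChainTranspose a i j (k + 1) (single (.inr j) 1) := by
      intro j hj
      rw [wChainTranspose_succ (Finset.mem_Icc.mp hj).2, ← coe_cReflₗ, ← coe_cReflₗ,
        map_smul, map_smul]
    rw [wChainTranspose_succ hlk, ih, ← coe_cReflₗ, ← coe_cReflₗ, map_add, map_add, map_sum,
      map_sum, coe_cReflₗ, coe_cReflₗ, ← cChain_succ hlk, cRefl_inr_cChain,
      Finset.sum_congr rfl hstep, Finset.sum_Icc_succ_top (by omega),
      wChainTranspose_of_le le_rfl, LinearMap.id_apply]
    abel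

theorem pCoeff_eq (k l : ℕ) :
    pCoeff a i k l
      = -wChainTranspose a i l k (cRefl a (.inr l) (single (.inl (i l)) 1)) (.inr k) := by
  rw [pCoeff, ← linearCombination_wChain_fw, ← linearCombination_wRefl,
    linearCombination_single, one_smul]

theorem qCoeff_eq (k j : ℕ) :
    qCoeff a i k j = -wChainTranspose a i j k (single (.inr j) 1) (.inr k) := by
  rw [qCoeff, ← linearCombination_wChain_fw, linearCombination_single, one_smul]

end Thickening

open Thickening

theorem thickening_p_eq_sum_q_r {I : Type*} [DecidableEq I] (a : I → I → ℤ)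
    (i : ℕ → I) (k l : ℕ) (hlk : l ≤ k) :
    pCoeff a i k l = ∑ j ∈ Finset.Icc l k, qCoeff a i k j * rCoeff a i j l := by
  rw [pCoeff_eq, wChainTranspose_cRefl_inr_single hlk, Finsupp.add_apply,
    cChain_apply_inr, zero_add, Finsupp.finsetSum_apply, ← Finset.sum_neg_distrib]
  refine Finset.sum_congr rfl fun j _ => ?_
  rw [qCoeff_eq, Finsupp.smul_apply, smul_eq_mul]
  ring
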